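/- Let E be a strongly connected finite directed graph with no sources, n ≥ 1, ρ the Perron–Frobenius eigenvalue (spectral radius) of the adjacency matrix A_E, and x the corresponding positive eigenvector. Then the vector m on E^{<n} defined by m(μ) = (1/n)·ρ^{−|μ|}·x_{s(μ)} is a positive eigenvector of the adjacency matrix A_n of E(n) with eigenvalue ρ. -/

import Mathlib

/-- A directed graph: vertices, edges, range and source maps. -/
structure DGraph where
  V : Type
  E : Type
  r : E → V
  s : E → V

namespace DGraph

variable {G : DGraph}

/-- A path in a directed graph: a word of composable edges together with a source vertex
(so that length-zero paths are vertices). -/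
structure Path (G : DGraph) where
  src : G.V
  edges : List G.E
  chain : List.Chain' (fun a b => G.s a = G.r b) edges
  srcEq : ∀ a ∈ edges.getLast?, G.s a = src

/-- The range of a path. -/
def Path.rng (p : G.Path) : G.V := p.edges.head?.elim p.src G.r

/-- The length of a path. -/
def Path.length (p : G.Path) : ℕ := p.edges.length

/-- The length-zero path at a vertex. -/
def Path.nil (G : DGraph) (v : G.V) : G.Path :=
  ⟨v, [], List.isChain_nil, by simp⟩

@[simp] theorem Path.length_nil (v : G.V) : (Path.nil G v).length = 0 := rfl

/-- Prepend an edge to a path. -/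
def Path.cons (e : G.E) (p : G.Path) (h : p.rng = G.s e) : G.Path where
  src := p.src
  edges := e :: p.edges
  chain := by
    rw [List.Chain', List.isChain_cons]
    refine ⟨fun b hb => ?_, p.chain⟩
    rw [← h]
    simp [Path.rng, Option.mem_def.mp hb]
  srcEq := by
    intro a ha
    cases hp : p.edges with
    | nil =>
      rw [hp] at ha
      simp only [List.getLast?_singleton, Option.mem_def, Option.some.injEq] at ha
      subst ha
      have h0 : p.rng = p.src := by simp [Path.rng, hp]
      rw [← h, h0]
    | cons f t =>
      apply p.srcEq
      rw [hp]
      rw [hp, List.getLast?_cons_cons] at ha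
      exact ha

@[simp] theorem Path.length_cons (e : G.E) (p : G.Path) (h : p.rng = G.s e) :
    (Path.cons e p h).length = p.length + 1 := rfl

/-- Remove the first edge of a path. -/
def Path.tail (p : G.Path) : G.Path where
  src := p.src
  edges := p.edges.tail
  chain := p.chain.tail
  srcEq := by
    intro a ha
    apply p.srcEq
    cases hp : p.edges with
    | nil => rw [hp] at ha; simp at ha
    | cons f t =>
      rw [hp] at ha
      simp only [List.tail_cons] at ha
      cases t with
      | nil => simp at ha
      | cons g u => rw [List.getLast?_cons_cons]; exact ha

@[simp] theorem Path.length_tail (p : G.Path) : p.tail.length = p.length - 1 := by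
  simp [Path.tail, Path.length]

/-- The initial segment of a path consisting of its first `k` edges. -/
def Path.take (p : G.Path) (k : ℕ) : G.Path where
  src := (p.edges.drop k).head?.elim p.src G.r
  edges := p.edges.take k
  chain := p.chain.take k
  srcEq := by
    intro a ha
    have hc : List.Chain' (fun a b => G.s a = G.r b) (p.edges.take k ++ p.edges.drop k) := by
      rw [List.take_append_drop]; exact p.chain
    rw [List.Chain', List.isChain_append] at hc
    obtain ⟨-, -, hadj⟩ := hc
    cases hd : p.edges.drop k with
    | nil =>
      have htake : p.edges.take k = p.edges := by
        have h1 := List.take_append_drop k p.edges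
        rw [hd, List.append_nil] at h1
        exact h1
      simp only [List.head?_nil, Option.elim]
      exact p.srcEq a (htake ▸ ha)
    | cons f t =>
      simp only [List.head?_cons, Option.elim]
      exact hadj a ha f (by rw [hd]; simp)

/-- `[μ]_n` : the initial segment of `μ` of length `|μ| mod n`. -/
def Path.trunc (m : ℕ) (p : G.Path) : G.Path := p.take (p.length % m)

/-- Concatenation of paths, `p` followed after `q` (so `p.append q` has range the range of `p`
and source the source of `q`). -/
def Path.append (p q : G.Path) (h : p.src = q.rng) : G.Path where
  src := q.src
  edges := p.edges ++ q.edges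
  chain := by
    rw [List.Chain', List.isChain_append]
    refine ⟨p.chain, q.chain, fun a ha b hb => ?_⟩
    rw [p.srcEq a ha, h]
    simp [Path.rng, Option.mem_def.mp hb]
  srcEq := by
    intro a ha
    cases hq : q.edges with
    | nil =>
      rw [hq, List.append_nil] at ha
      have h0 : q.rng = q.src := by simp [Path.rng, hq]
      rw [p.srcEq a ha, h, h0]
    | cons f t =>
      apply q.srcEq
      rw [hq]
      rw [hq, List.getLast?_append_cons] at ha
      exact ha

/-- A graph is row-finite if every vertex receives finitely many edges. -/
def RowFinite (G : DGraph) : Prop := ∀ v : G.V, {e : G.E | G.r e = v}.Finite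

/-- A graph has no sources if every vertex receives an edge. -/
def NoSources (G : DGraph) : Prop := ∀ v : G.V, ∃ e : G.E, G.r e = v

/-- A graph is strongly connected if for all vertices `v, w` there is a path from `w` to `v`. -/
def StronglyConnected (G : DGraph) : Prop :=
  ∀ v w : G.V, ∃ p : G.Path, p.src = w ∧ p.rng = v

/-- The set of paths of length less than `n`. -/
abbrev PathLt (G : DGraph) (n : ℕ) := {p : G.Path // p.length < n}

/-- The graph `E(n)` of Kribs and Solel: vertices are paths of length `< n`, and edges
are pairs `(e, μ)` with `r(μ) = s(e)` and `|μ| < n`, with source `μ` and range `[eμ]_n`. -/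
def Eln (G : DGraph) (n : ℕ) : DGraph where
  V := PathLt G n
  E := {q : G.E × G.Path // q.2.length + 1 ≤ n ∧ q.2.rng = G.s q.1}
  s := fun q => ⟨q.1.2, Nat.lt_of_succ_le q.2.1⟩
  r := fun q =>
    if h : q.1.2.length + 1 < n then
      ⟨Path.cons q.1.1 q.1.2 q.2.2, by simpa using h⟩
    else
      ⟨Path.nil G (G.r q.1.1), Nat.lt_of_lt_of_le (Nat.succ_pos _) q.2.1⟩

/-- A vertex of `E`, regarded as a length-zero vertex of `E(n)`. -/
def vtx (G : DGraph) (n : ℕ) (hn : 0 < n) (v : G.V) : PathLt G n :=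
  ⟨Path.nil G v, by simpa using hn⟩

/-- `d` is the greatest common divisor of the set `S` of natural numbers. -/
def IsGCDOf (d : ℕ) (S : Set ℕ) : Prop :=
  (∀ k ∈ S, d ∣ k) ∧ ∀ c : ℕ, (∀ k ∈ S, c ∣ k) → c ∣ d

/-- The set of lengths of (nonempty) cycles of `G`. -/
def CycleLengths (G : DGraph) : Set ℕ :=
  {k | ∃ p : G.Path, p.rng = p.src ∧ p.edges ≠ [] ∧ p.length = k}

/-- The set of lengths of (nonempty) cycles of `G` based at `v`. -/
def CycleLengthsAt (G : DGraph) (v : G.V) : Set ℕ :=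
  {k | ∃ p : G.Path, p.src = v ∧ p.rng = v ∧ p.edges ≠ [] ∧ p.length = k}

/-- The relation `v ∼ w` iff there is a path from `w` to `v` whose length is divisible by `d`. -/
def SimRel (G : DGraph) (d : ℕ) (v w : G.V) : Prop :=
  ∃ p : G.Path, p.src = w ∧ p.rng = v ∧ d ∣ p.length

/-- The connected-component relation of a graph: the smallest equivalence relation
identifying the range and the source of each edge. -/
def Comp (G : DGraph) : G.V → G.V → Prop :=
  Relation.EqvGen (fun a b => ∃ f : G.E, G.r f = a ∧ G.s f = b)

/-- The adjacency matrix of `E(n)` acting on vectors indexed by `E^{<n}`. -/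
noncomputable def Aact (G : DGraph) (n : ℕ) (g : PathLt G n → ℝ) (v : PathLt G n) : ℝ :=
  ∑ᶠ (f : (Eln G n).E) (_ : (Eln G n).r f = v), g ((Eln G n).s f)

/-- The pushforward of a vector on `E^{<n}` along `ν ↦ [ν]_m`. -/
noncomputable def pushf (G : DGraph) (n m : ℕ) (g : PathLt G n → ℝ) (μ : PathLt G m) : ℝ :=
  ∑ᶠ (ν : PathLt G n) (_ : Path.trunc m ν.1 = μ.1), g ν

instance : TopologicalSpace G.Path := ⊥

/-- The inverse limit `lim← E^{<n_k}` along the truncation maps. -/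
def InvLim (G : DGraph) (n : ℕ → ℕ) : Type :=
  {f : (k : ℕ) → PathLt G (n k) // ∀ k, Path.trunc (n k) (f (k+1)).1 = (f k).1}

instance (G : DGraph) (n : ℕ → ℕ) : TopologicalSpace (InvLim G n) :=
  inferInstanceAs (TopologicalSpace
    {f : (k : ℕ) → PathLt G (n k) // ∀ k, Path.trunc (n k) (f (k+1)).1 = (f k).1})

noncomputable instance (G : DGraph) (n : ℕ → ℕ) : MeasurableSpace (InvLim G n) := borel _

end DGraph

/-!
An edge `(e, μ)` of `E(n)` has range `eμ`, except when `|μ| = n - 1`, where it wraps around to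
the vertex `r(e)`. So a path `eμ` of positive length receives the single edge `(e, μ)`, and
`(A_n m)(eμ) = m(μ) = ρ m(eμ)` since the lengths differ by one. A vertex `v` receives one edge
for each `eμ ∈ vE^n`, and iterating `A_E x = ρ x` gives `∑_{μ ∈ wE^k} x_{s(μ)} = ρ^k x_w`; hence
`(A_n m)(v) = (1/n) ρ^{-(n-1)} ρ^n x_v = ρ m(v)`.
-/

theorem finsum_sigma_of_finite {α : Type*} {β : α → Type*} {M : Type*} [AddCommMonoid M]
    [Finite α] [∀ a, Finite (β a)] (f : (Σ a, β a) → M) :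
    ∑ᶠ s, f s = ∑ᶠ (a) (b), f ⟨a, b⟩ := by
  have := Fintype.ofFinite α
  have := fun a => Fintype.ofFinite (β a)
  simp only [finsum_eq_sum_of_fintype, Fintype.sum_sigma]

namespace DGraph

variable {G : DGraph}

namespace Path

theorem ext {p q : G.Path} (hsrc : p.src = q.src) (hedges : p.edges = q.edges) : p = q := by
  cases p; cases q; cases hsrc; cases hedges; rfl

theorem src_eq_getLast?_elim (p : G.Path) : p.src = p.edges.getLast?.elim p.rng G.s := by
  cases h : p.edges.getLast? with
  | none => simp [Path.rng, List.getLast?_eq_none_iff.1 h]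
  | some a => exact (p.srcEq a h).symm

theorem eq_of_rng_eq_of_edges_eq {p q : G.Path} (hrng : p.rng = q.rng)
    (hedges : p.edges = q.edges) : p = q :=
  ext (by rw [src_eq_getLast?_elim p, src_eq_getLast?_elim q, hrng, hedges]) hedges

@[simp] theorem src_nil (v : G.V) : (nil G v).src = v := rfl

@[simp] theorem src_cons (e : G.E) (p : G.Path) (h : p.rng = G.s e) :
    (p.cons e h).src = p.src := rfl

theorem cons_inj {e e' : G.E} {p p' : G.Path} {h : p.rng = G.s e} {h' : p'.rng = G.s e'} :
    p.cons e h = p'.cons e' h' ↔ e = e' ∧ p = p' := by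
  constructor
  · intro hc
    have hedges := congrArg Path.edges hc
    simp only [Path.cons, List.cons.injEq] at hedges
    exact ⟨hedges.1, Path.ext (congrArg Path.src hc :) hedges.2⟩
  · rintro ⟨rfl, rfl⟩
    rfl

theorem eq_nil_or_eq_cons (p : G.Path) :
    (∃ v, p = nil G v) ∨ ∃ e μ h, p = Path.cons e μ h := by
  cases hp : p.edges with
  | nil => exact .inl ⟨p.src, ext rfl hp⟩
  | cons e t =>
    have hchain := p.chain
    rw [hp] at hchain
    refine .inr ⟨e, p.tail, ?_, ext rfl (by simp [Path.cons, Path.tail, hp])⟩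
    cases t with
    | nil => simp [Path.rng, Path.tail, hp, p.srcEq e (by simp [hp])]
    | cons f u => simp [Path.rng, Path.tail, hp, (List.isChain_cons_cons.1 hchain).1]

end Path

/-- `wE^k` -/
abbrev PathsTo (G : DGraph) (k : ℕ) (w : G.V) := {p : G.Path // p.length = k ∧ p.rng = w}

instance [Finite G.E] (k : ℕ) (w : G.V) : Finite (PathsTo G k w) :=
  have := (List.finite_length_eq G.E k).to_subtype
  Finite.of_injective (fun p => (⟨p.1.edges, p.2.1⟩ : {l : List G.E | l.length = k}))
    fun p q h => Subtype.ext <|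
      Path.eq_of_rng_eq_of_edges_eq (p.2.2.trans q.2.2.symm) (congrArg Subtype.val h)

instance (w : G.V) : Unique (PathsTo G 0 w) where
  default := ⟨Path.nil G w, rfl, rfl⟩
  uniq p := Subtype.ext <|
    Path.eq_of_rng_eq_of_edges_eq p.2.2 (List.eq_nil_of_length_eq_zero p.2.1)

noncomputable def pathsToSuccEquiv (k : ℕ) (w : G.V) :
    (Σ e : {e // G.r e = w}, PathsTo G k (G.s e)) ≃ PathsTo G (k + 1) w :=
  Equiv.ofBijective (fun s => ⟨s.2.1.cons s.1 s.2.2.2, by simp [s.2.2.1], s.1.2⟩) <| by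
    constructor
    · rintro ⟨⟨e, he⟩, μ, hμ⟩ ⟨⟨e', he'⟩, μ', hμ'⟩ h
      have hcons : μ.cons e hμ.2 = μ'.cons e' hμ'.2 := congrArg Subtype.val h
      obtain ⟨rfl, rfl⟩ := Path.cons_inj.1 hcons
      rfl
    · rintro ⟨p, hlen, hrng⟩
      obtain ⟨v, rfl⟩ | ⟨e, μ, h, rfl⟩ := p.eq_nil_or_eq_cons
      · simp at hlen
      · exact ⟨⟨⟨e, hrng⟩, μ, by simpa using hlen, h⟩, rfl⟩

theorem finsum_src_pathsTo [Finite G.E] {ρ : ℝ} {x : G.V → ℝ}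
    (heig : ∀ v, ∑ᶠ (e : G.E) (_ : G.r e = v), x (G.s e) = ρ * x v) (k : ℕ) (w : G.V) :
    ∑ᶠ p : PathsTo G k w, x p.1.src = ρ ^ k * x w := by
  induction k generalizing w with
  | zero =>
    rw [finsum_unique, pow_zero, one_mul]
    rfl
  | succ k ih =>
    calc ∑ᶠ p : PathsTo G (k + 1) w, x p.1.src
        = ∑ᶠ (e : {e // G.r e = w}) (μ : PathsTo G k (G.s e)), x μ.1.src := by
          rw [← finsum_comp_equiv (pathsToSuccEquiv k w) (f := fun p => x p.1.src),
            finsum_sigma_of_finite]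
          rfl
      _ = ρ ^ (k + 1) * x w := by
          simp only [ih]
          rw [← mul_finsum, finsum_subtype_eq_finsum_cond (f := fun e => x (G.s e)), heig,
            pow_succ, mul_assoc]

theorem eln_r_val_of_lt {n : ℕ} (f : (Eln G n).E) (hf : f.1.2.length + 1 < n) :
    ((Eln G n).r f).1 = f.1.2.cons f.1.1 f.2.2 := by
  simp only [Eln, dif_pos hf]

theorem eln_r_val_of_not_lt {n : ℕ} (f : (Eln G n).E) (hf : ¬f.1.2.length + 1 < n) :
    ((Eln G n).r f).1 = Path.nil G (G.r f.1.1) := by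
  simp only [Eln, dif_neg hf]

theorem eln_r_eq_iff {n : ℕ} (f : (Eln G n).E) (p : PathLt G n) :
    (Eln G n).r f = p ↔ ((Eln G n).r f).1 = p.1 :=
  Subtype.ext_iff

theorem aact_cons {n : ℕ} (g : G.Path → ℝ) (e : G.E) (μ : G.Path) (h : μ.rng = G.s e)
    (hlt : (μ.cons e h).length < n) :
    Aact G n (fun q => g q.1) ⟨μ.cons e h, hlt⟩ = g μ := by
  let f₀ : (Eln G n).E := ⟨(e, μ), hlt.le, h⟩
  have hr : ∀ f, (Eln G n).r f = ⟨μ.cons e h, hlt⟩ ↔ f = f₀ := by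
    refine fun f => ⟨fun hf => ?_, fun hf => ?_⟩
    · rw [eln_r_eq_iff] at hf
      by_cases hc : f.1.2.length + 1 < n
      · rw [eln_r_val_of_lt f hc, Path.cons_inj] at hf
        exact Subtype.ext (Prod.ext hf.1 hf.2)
      · rw [eln_r_val_of_not_lt f hc] at hf
        simpa [Path.nil, Path.cons] using congrArg Path.edges hf
    · rw [hf, eln_r_eq_iff]
      exact eln_r_val_of_lt f₀ hlt
  have hcond : ∀ f, (∑ᶠ (_ : (Eln G n).r f = ⟨μ.cons e h, hlt⟩), g ((Eln G n).s f).1)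
      = ∑ᶠ (_ : f = f₀), g ((Eln G n).s f).1 := fun f => by rw [hr f]
  rw [Aact, finsum_congr hcond, finsum_cond_eq_left]
  rfl

theorem eln_r_eq_nil_iff {k : ℕ} {v : G.V} (f : (Eln G (k + 1)).E) :
    (Eln G (k + 1)).r f = vtx G (k + 1) k.succ_pos v ↔ f.1.2.length = k ∧ G.r f.1.1 = v := by
  rw [eln_r_eq_iff]
  change _ = Path.nil G v ↔ _
  by_cases hc : f.1.2.length + 1 < k + 1
  · rw [eln_r_val_of_lt f hc]
    refine iff_of_false (fun hnil => ?_) (by omega)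
    simpa [Path.nil, Path.cons] using congrArg Path.edges hnil
  · rw [eln_r_val_of_not_lt f hc]
    have hle := f.2.1
    constructor
    · exact fun hnil => ⟨by omega, congrArg Path.src hnil⟩
    · rintro ⟨-, hv⟩
      rw [hv]

def elnEdgesToNilEquiv (k : ℕ) (v : G.V) :
    (Σ e : {e // G.r e = v}, PathsTo G k (G.s e)) ≃
      {f : (Eln G (k + 1)).E // (Eln G (k + 1)).r f = vtx G (k + 1) k.succ_pos v} where
  toFun s := ⟨⟨(s.1, s.2.1), by simp [s.2.2.1], s.2.2.2⟩,
    (eln_r_eq_nil_iff _).2 ⟨s.2.2.1, s.1.2⟩⟩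
  invFun f := ⟨⟨f.1.1.1, ((eln_r_eq_nil_iff _).1 f.2).2⟩,
    f.1.1.2, ((eln_r_eq_nil_iff _).1 f.2).1, f.1.2.2⟩
  left_inv _ := rfl
  right_inv _ := rfl

theorem aact_nil [Finite G.E] (g : G.Path → ℝ) (k : ℕ) (v : G.V) :
    Aact G (k + 1) (fun q => g q.1) (vtx G (k + 1) k.succ_pos v) =
      ∑ᶠ (e : {e // G.r e = v}) (μ : PathsTo G k (G.s e)), g μ.1 := by
  rw [Aact, ← finsum_subtype_eq_finsum_cond,
    ← finsum_comp_equiv (elnEdgesToNilEquiv k v), finsum_sigma_of_finite]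
  rfl

theorem aact_zpow_mul_src [Finite G.E] {n : ℕ} {ρ : ℝ} (hρ : ρ ≠ 0) {x : G.V → ℝ}
    (heig : ∀ v, ∑ᶠ (e : G.E) (_ : G.r e = v), x (G.s e) = ρ * x v) (c : ℝ) (p : PathLt G n) :
    Aact G n (fun q => c * ρ ^ (-(q.1.length : ℤ)) * x q.1.src) p =
      ρ * (c * ρ ^ (-(p.1.length : ℤ)) * x p.1.src) := by
  obtain ⟨p, hp⟩ := p
  obtain ⟨v, rfl⟩ | ⟨e, μ, h, rfl⟩ := p.eq_nil_or_eq_cons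
  · obtain ⟨k, rfl⟩ := Nat.exists_eq_add_one.2 hp
    change Aact G (k + 1) _ (vtx G (k + 1) k.succ_pos v) = _
    rw [aact_nil (fun μ => c * ρ ^ (-(μ.length : ℤ)) * x μ.src)]
    calc ∑ᶠ (e : {e // G.r e = v}) (μ : PathsTo G k (G.s e)),
          c * ρ ^ (-(μ.1.length : ℤ)) * x μ.1.src
        = ∑ᶠ e : {e // G.r e = v}, c * ρ ^ (-(k : ℤ)) * (ρ ^ k * x (G.s e)) := by
          refine finsum_congr fun e => ?_
          rw [← finsum_src_pathsTo heig, mul_finsum]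
          exact finsum_congr fun μ => by rw [μ.2.1, mul_assoc]
      _ = c * ∑ᶠ e : {e // G.r e = v}, x (G.s e) := by
          rw [mul_finsum]
          refine finsum_congr fun e => ?_
          rw [zpow_neg, zpow_natCast, mul_assoc, inv_mul_cancel_left₀ (pow_ne_zero k hρ)]
      _ = ρ * (c * ρ ^ (-((Path.nil G v).length : ℤ)) * x (Path.nil G v).src) := by
          rw [finsum_subtype_eq_finsum_cond (f := fun e => x (G.s e)), heig]
          simp only [Path.length_nil, Path.src_nil, CharP.cast_eq_zero, neg_zero, zpow_zero]
          ring
  · rw [aact_cons (fun μ => c * ρ ^ (-(μ.length : ℤ)) * x μ.src)]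
    simp only [Path.length_cons, Path.src_cons, Nat.cast_add, Nat.cast_one, neg_add,
      zpow_add₀ hρ, zpow_neg_one]
    field_simp

end DGraph

open DGraph in
theorem Aact_perron_eigenvector_general (G : DGraph) [Finite G.E]
    (n : ℕ)
    (ρ : ℝ) (hρ : 0 < ρ) (x : G.V → ℝ) (hx : ∀ v, 0 < x v)
    (heig : ∀ v, ∑ᶠ (e : G.E) (_ : G.r e = v), x (G.s e) = ρ * x v) :
    (∀ p : PathLt G n, 0 < (1 / (n : ℝ)) * ρ ^ (-(p.1.length : ℤ)) * x p.1.src) ∧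
    (∀ p : PathLt G n,
      Aact G n (fun q : PathLt G n => (1 / (n : ℝ)) * ρ ^ (-(q.1.length : ℤ)) * x q.1.src) p
        = ρ * ((1 / (n : ℝ)) * ρ ^ (-(p.1.length : ℤ)) * x p.1.src)) := by
  refine ⟨fun p => ?_, aact_zpow_mul_src hρ.ne' heig (1 / n)⟩
  have hn : (0 : ℝ) < n := by exact_mod_cast p.1.length.zero_le.trans_lt p.2
  have := hx p.1.src
  positivity

open DGraph in
/-- Let `E` be a strongly connected finite directed graph with no sources,
`n ≥ 1`, `ρ` the Perron–Frobenius eigenvalue of `A_E` and `x` the corresponding positive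
eigenvector.  The vector `m(μ) = (1/n)·ρ^{−|μ|}·x_{s(μ)}` on `E^{<n}` is a positive
eigenvector of the adjacency matrix `A_n` of `E(n)` with eigenvalue `ρ`. -/
theorem Aact_perron_eigenvector (G : DGraph) [Finite G.V] [Finite G.E]
    (hsc : StronglyConnected G) (hns : NoSources G) (n : ℕ) (hn : 0 < n)
    (ρ : ℝ) (hρ : 0 < ρ) (x : G.V → ℝ) (hx : ∀ v, 0 < x v)
    (heig : ∀ v, ∑ᶠ (e : G.E) (_ : G.r e = v), x (G.s e) = ρ * x v) :
    (∀ p : PathLt G n, 0 < (1 / (n : ℝ)) * ρ ^ (-(p.1.length : ℤ)) * x p.1.src) ∧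
    (∀ p : PathLt G n,
      Aact G n (fun q : PathLt G n => (1 / (n : ℝ)) * ρ ^ (-(q.1.length : ℤ)) * x q.1.src) p
        = ρ * ((1 / (n : ℝ)) * ρ ^ (-(p.1.length : ℤ)) * x p.1.src)) :=
  Aact_perron_eigenvector_general G n ρ hρ x hx heig
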